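/- Let g be a finite-dimensional simple Lie algebra over ℂ with orthonormal basis {x_i} with respect to a fixed invariant form. On ⋀^{d+1} g define the operator C_w = Σ_{i,j} W_{x_i} ∘ L_{[x_i, x_j]} ∘ I_{x_j}, where W_x is left exterior multiplication by x, I_x is contraction with x via the invariant form, and L_x is the adjoint-action Lie derivative. Define ∂: ⋀^{d+1} g → g ⊗ ⋀^{d-1} g on decomposables by ∂(p₁ ∧ … ∧ p_{d+1}) = Σ_{r<s} (−1)^{r+s} [p_s, p_r] ⊗ p₁ ∧ … ∧ p̂_r ∧ … ∧ p̂_s ∧ … ∧ p_{d+1}. Then C_w vanishes on the kernel of ∂: if y ∈ ⋀^{d+1} g satisfies ∂y = 0, then C_w y = 0. -/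

import Mathlib

/-!
On `⋀^{d+1} g` the operator `C_w` factors as `M ∘ ∂`, where `M (w ⊗ a) = ω w ∧ a` with
`ω w = ∑ₖ xₖ ∧ ⁅xₖ, w⁆`; hence it vanishes on the kernel of `∂`. The factorization is checked
on decomposables by induction on the degree. Since `L_z = ∑ₖ W_{⁅z, xₖ⁆} I_{xₖ}`, the Jacobi
identity gives `C_w (v ∧ a) = v ∧ C_w a + ∑ⱼ ω ⁅v, xⱼ⁆ ∧ I_{xⱼ} a`, and the second summand is
`M` applied to the terms of `∂ (v ∧ a)` in which `v` is bracketed.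
-/

open ExteriorAlgebra
open scoped TensorProduct

section Module

variable {R : Type*} [CommRing R] {M : Type*} [AddCommGroup M] [Module R M]

theorem ExteriorAlgebra.ι_mul_ι_mul (a b : M) (c : ExteriorAlgebra R M) :
    ι R a * (ι R b * c) = -(ι R b * (ι R a * c)) := by
  rw [← mul_assoc, ← mul_assoc, eq_neg_of_add_eq_zero_left (ι_add_mul_swap a b), neg_mul]

theorem ExteriorAlgebra.commute_ι_mul_ι_ι (a b c : M) :
    Commute (ι R a * ι R b) (ι R c) := by
  rw [Commute, SemiconjBy, mul_assoc, ← mul_one (ι R c), ι_mul_ι_mul b c, mul_neg,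
    ι_mul_ι_mul a c, neg_neg, mul_one, mul_assoc, one_mul]

theorem Module.Basis.sum_smul_eq_self_of_orthonormal {κ : Type*} [Fintype κ] [DecidableEq κ]
    (b : Module.Basis κ R M) {B : M →ₗ[R] M →ₗ[R] R}
    (hb : ∀ i j, B (b i) (b j) = if i = j then 1 else 0) (v : M) :
    ∑ j, B (b j) v • b j = v := by
  have hcoord : ∀ j, B (b j) = b.coord j := fun j =>
    b.ext fun i => by simp [hb, Finsupp.single_apply, eq_comm]
  simp only [hcoord, Module.Basis.coord_apply, b.sum_repr]

structure IsContraction (B : M →ₗ[R] M →ₗ[R] R)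
    (I : M → (ExteriorAlgebra R M →ₗ[R] ExteriorAlgebra R M)) : Prop where
  map_one : ∀ z, I z 1 = 0
  map_ι_mul : ∀ z v a, I z (ι R v * a) = B z v • a - ι R v * I z a

theorem IsContraction.apply_prod_ofFn {B : M →ₗ[R] M →ₗ[R] R}
    {I : M → (ExteriorAlgebra R M →ₗ[R] ExteriorAlgebra R M)} (hI : IsContraction B I)
    (z : M) {m : ℕ} (p : Fin m → M) :
    I z (List.ofFn fun t => ι R (p t)).prod =
      ∑ s : Fin m, ((-1 : R) ^ (s : ℕ) * B z (p s)) •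
        ((List.ofFn fun t => ι R (p t)).eraseIdx s).prod := by
  induction m with
  | zero => simpa using hI.map_one z
  | succ m ih =>
    simp only [List.ofFn_succ, List.prod_cons, hI.map_ι_mul, ih, Fin.sum_univ_succ,
      Fin.val_zero, Fin.val_succ, List.eraseIdx_cons_zero, List.eraseIdx_cons_succ,
      Finset.mul_sum, mul_smul_comm, pow_zero, one_mul, pow_succ]
    rw [sub_eq_add_neg, ← Finset.sum_neg_distrib]
    congr 1
    refine Finset.sum_congr rfl fun s _ => ?_
    rw [← neg_smul, mul_neg_one, neg_mul]

section DualFamily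

variable {κ : Type*} [Fintype κ] {B : M →ₗ[R] M →ₗ[R] R} {x : κ → M}

theorem sum_smul_map_eq_of_sum_smul_eq {V : Type*} [AddCommGroup V] [Module R V]
    (hx : ∀ v, ∑ j, B (x j) v • x j = v) (F : M →ₗ[R] V) (v : M) :
    ∑ j, B (x j) v • F (x j) = F v := by
  simp_rw [← map_smul, ← map_sum, hx]

theorem IsContraction.sum_mul_apply_prod_ofFn
    {I : M → (ExteriorAlgebra R M →ₗ[R] ExteriorAlgebra R M)} (hI : IsContraction B I)
    (hx : ∀ v, ∑ j, B (x j) v • x j = v) (F : M →ₗ[R] ExteriorAlgebra R M)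
    {m : ℕ} (p : Fin m → M) :
    ∑ j, F (x j) * I (x j) (List.ofFn fun t => ι R (p t)).prod =
      ∑ s : Fin m, (-1 : R) ^ (s : ℕ) •
        (F (p s) * ((List.ofFn fun t => ι R (p t)).eraseIdx s).prod) := by
  simp only [hI.apply_prod_ofFn, Finset.mul_sum, mul_smul_comm, mul_smul]
  rw [Finset.sum_comm]
  refine Finset.sum_congr rfl fun s _ => ?_
  rw [← Finset.smul_sum]
  congr 1
  simpa using sum_smul_map_eq_of_sum_smul_eq hx
    (LinearMap.mulRight R ((List.ofFn fun t => ι R (p t)).eraseIdx s).prod ∘ₗ F) (p s)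

end DualFamily

end Module

section LieAlgebra

variable {R : Type*} [CommRing R] {g : Type*} [LieRing g] [LieAlgebra R g]
  {κ : Type*} [Fintype κ] {Φ : g →ₗ[R] g →ₗ[R] R} {x : κ → g}

structure IsAdDerivation (L : g → (ExteriorAlgebra R g →ₗ[R] ExteriorAlgebra R g)) : Prop where
  map_one : ∀ z, L z 1 = 0
  map_ι_mul : ∀ z v a, L z (ι R v * a) = ι R ⁅z, v⁆ * a + ι R v * L z a

variable {I L : g → (ExteriorAlgebra R g →ₗ[R] ExteriorAlgebra R g)}

theorem IsAdDerivation.apply_eq_sum (hL : IsAdDerivation L) (hI : IsContraction Φ I)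
    (hx : ∀ v, ∑ j, Φ (x j) v • x j = v) (z : g) (a : ExteriorAlgebra R g) :
    L z a = ∑ k, ι R ⁅z, x k⁆ * I (x k) a := by
  induction a using CliffordAlgebra.left_induction with
  | algebraMap r =>
    simp [Algebra.algebraMap_eq_smul_one, hL.map_one, hI.map_one]
  | add a b ha hb => simp only [map_add, ha, hb, mul_add, Finset.sum_add_distrib]
  | ι_mul a v ha =>
    change L z (ι R v * a) = ∑ k, ι R ⁅z, x k⁆ * I (x k) (ι R v * a)
    have hv : ∑ k, Φ (x k) v • ι R ⁅z, x k⁆ * a = ι R ⁅z, v⁆ * a := by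
      simpa using sum_smul_map_eq_of_sum_smul_eq hx
        ((LinearMap.mulRight R a) ∘ₗ ι R ∘ₗ LieAlgebra.ad R g z) v
    simp only [hL.map_ι_mul, hI.map_ι_mul, ha, mul_sub, mul_smul_comm, Finset.sum_sub_distrib]
    rw [← hv, Finset.mul_sum, sub_eq_add_neg, ← Finset.sum_neg_distrib]
    simp only [smul_mul_assoc]
    exact congrArg _ (Finset.sum_congr rfl fun k _ => ι_mul_ι_mul _ _ _)

theorem IsAdDerivation.sum_smul_apply (hL : IsAdDerivation L) (hI : IsContraction Φ I)
    (hx : ∀ v, ∑ j, Φ (x j) v • x j = v) (f : g →ₗ[R] g) (v : g) (a : ExteriorAlgebra R g) :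
    ∑ j, Φ (x j) v • L (f (x j)) a = L (f v) a := by
  conv_rhs => rw [← hx v]
  simp only [hL.apply_eq_sum hI hx, map_sum, map_smul, sum_lie, smul_lie, Finset.sum_mul,
    smul_mul_assoc, Finset.smul_sum]
  exact Finset.sum_comm

variable (x) in
noncomputable def casimirWedge : g →ₗ[R] ExteriorAlgebra R g :=
  ∑ k, LinearMap.mulLeft R (ι R (x k)) ∘ₗ ι R ∘ₗ (LieAlgebra.ad R g (x k) : g →ₗ[R] g)

theorem casimirWedge_apply (w : g) :
    casimirWedge x w = ∑ k, ι R (x k) * ι R ⁅x k, w⁆ := by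
  simp [casimirWedge]

theorem commute_casimirWedge_ι (w v : g) : Commute (casimirWedge x w) (ι R v) := by
  rw [casimirWedge_apply]
  exact Commute.sum_left _ _ _ fun k _ => commute_ι_mul_ι_ι _ _ _

variable (x I L) in
noncomputable def casimirOp : ExteriorAlgebra R g →ₗ[R] ExteriorAlgebra R g :=
  ∑ i, ∑ j, LinearMap.mulLeft R (ι R (x i)) ∘ₗ L ⁅x i, x j⁆ ∘ₗ I (x j)

theorem casimirOp_apply (a : ExteriorAlgebra R g) :
    casimirOp x I L a = ∑ i, ∑ j, ι R (x i) * L ⁅x i, x j⁆ (I (x j) a) := by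
  simp [casimirOp]

theorem casimirOp_ι_mul (hL : IsAdDerivation L) (hI : IsContraction Φ I)
    (hx : ∀ v, ∑ j, Φ (x j) v • x j = v) (v : g) (a : ExteriorAlgebra R g) :
    casimirOp x I L (ι R v * a) =
      ι R v * casimirOp x I L a + ∑ j, casimirWedge x ⁅v, x j⁆ * I (x j) a := by
  have hsum : ∀ i, ∑ j, Φ (x j) v • L ⁅x i, x j⁆ a =
      ∑ j, ι R ⁅⁅x i, v⁆, x j⁆ * I (x j) a := fun i => by
    rw [← hL.apply_eq_sum hI hx]
    exact hL.sum_smul_apply hI hx (LieAlgebra.ad R g (x i)) v a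
  have hjacobi : ∀ i j, ι R ⁅⁅x i, v⁆, x j⁆ - ι R ⁅⁅x i, x j⁆, v⁆ = ι R ⁅x i, ⁅v, x j⁆⁆ := by
    intro i j
    rw [← map_sub, leibniz_lie, ← lie_skew ⁅x i, x j⁆ v, sub_eq_add_neg, neg_neg]
  simp only [casimirOp_apply, casimirWedge_apply, hI.map_ι_mul, map_sub, map_smul,
    hL.map_ι_mul, mul_sub, mul_add, Finset.sum_sub_distrib, Finset.sum_add_distrib]
  have hderiv : ∑ i, ∑ j, ι R (x i) * Φ (x j) v • L ⁅x i, x j⁆ a =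
      ∑ i, ∑ j, ι R (x i) * (ι R ⁅⁅x i, v⁆, x j⁆ * I (x j) a) := by
    simp_rw [← Finset.mul_sum, hsum]
  have hswap : ∑ i, ∑ j, ι R (x i) * (ι R v * L ⁅x i, x j⁆ (I (x j) a)) =
      -(ι R v * ∑ i, ∑ j, ι R (x i) * L ⁅x i, x j⁆ (I (x j) a)) := by
    simp only [Finset.mul_sum, ← Finset.sum_neg_distrib]
    exact Finset.sum_congr rfl fun i _ => Finset.sum_congr rfl fun j _ => ι_mul_ι_mul _ _ _
  have hwedge : ∑ j, (∑ k, ι R (x k) * ι R ⁅x k, ⁅v, x j⁆⁆) * I (x j) a =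
      ∑ k, ∑ j, ι R (x k) * (ι R ⁅x k, ⁅v, x j⁆⁆ * I (x j) a) := by
    simp_rw [Finset.sum_mul, mul_assoc]
    exact Finset.sum_comm
  rw [hderiv, hswap, hwedge, sub_add_eq_sub_sub, sub_neg_eq_add, ← Finset.sum_sub_distrib,
    add_comm]
  congr 1
  refine Finset.sum_congr rfl fun i _ => ?_
  rw [← Finset.sum_sub_distrib]
  refine Finset.sum_congr rfl fun j _ => ?_
  rw [← mul_sub, ← sub_mul, hjacobi]

variable (x) in
noncomputable def casimirWedgeMul : g ⊗[R] ExteriorAlgebra R g →ₗ[R] ExteriorAlgebra R g :=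
  TensorProduct.lift (LinearMap.mul R (ExteriorAlgebra R g) ∘ₗ casimirWedge x)

theorem casimirWedgeMul_tmul (w : g) (a : ExteriorAlgebra R g) :
    casimirWedgeMul x (w ⊗ₜ a) = casimirWedge x w * a := by
  simp [casimirWedgeMul]

theorem casimirWedgeMul_lTensor_mulLeft_ι (v : g) (t : g ⊗[R] ExteriorAlgebra R g) :
    casimirWedgeMul x ((LinearMap.mulLeft R (ι R v)).lTensor g t) =
      ι R v * casimirWedgeMul x t := by
  induction t using TensorProduct.induction_on with
  | zero => simp
  | tmul w a =>
    rw [LinearMap.lTensor_tmul, casimirWedgeMul_tmul, casimirWedgeMul_tmul,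
      LinearMap.mulLeft_apply, ← mul_assoc, ← mul_assoc, (commute_casimirWedge_ι w v).eq]
  | add s t hs ht => rw [map_add, map_add, hs, ht, map_add, mul_add]

variable (R) in
noncomputable def wedgeBoundary {m : ℕ} (p : Fin m → g) : g ⊗[R] ExteriorAlgebra R g :=
  ∑ r : Fin m, ∑ s : Fin m,
    if r < s then
      ((-1 : R) ^ (r.val + s.val)) •
        (⁅p s, p r⁆ ⊗ₜ[R]
          (((List.ofFn fun t => ι R (p t)).eraseIdx s.val).eraseIdx r.val).prod)
    else 0

theorem wedgeBoundary_cons {m : ℕ} (v : g) (q : Fin m → g) :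
    wedgeBoundary R (Fin.cons v q : Fin (m + 1) → g) =
      ∑ s : Fin m, (-1 : R) ^ (s : ℕ) •
          (⁅v, q s⁆ ⊗ₜ ((List.ofFn fun t => ι R (q t)).eraseIdx s).prod) +
        (LinearMap.mulLeft R (ι R v)).lTensor g (wedgeBoundary R q) := by
  simp only [wedgeBoundary, Fin.sum_univ_succ, Fin.cons_zero, Fin.cons_succ, List.ofFn_succ,
    List.eraseIdx_cons_succ, List.eraseIdx_cons_zero, Fin.succ_lt_succ_iff, Fin.not_lt_zero,
    Fin.succ_pos, if_true, if_false, Fin.val_zero, Fin.val_succ, zero_add, map_sum]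
  congr 1
  · refine Finset.sum_congr rfl fun s _ => ?_
    rw [pow_succ, mul_neg_one, neg_smul, ← smul_neg, ← TensorProduct.neg_tmul, lie_skew]
  · refine Finset.sum_congr rfl fun r _ => Finset.sum_congr rfl fun s _ => ?_
    split_ifs
    · rw [map_smul, LinearMap.lTensor_tmul, LinearMap.mulLeft_apply, List.prod_cons,
        add_add_add_comm, pow_add, neg_one_pow_two, mul_one]
    · rw [map_zero]

theorem casimirOp_prod_ofFn (hL : IsAdDerivation L) (hI : IsContraction Φ I)
    (hx : ∀ v, ∑ j, Φ (x j) v • x j = v) {m : ℕ} (p : Fin m → g) :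
    casimirOp x I L (List.ofFn fun t => ι R (p t)).prod =
      casimirWedgeMul x (wedgeBoundary R p) := by
  induction p using Fin.consInduction with
  | elim0 => simp [casimirOp_apply, hI.map_one, wedgeBoundary]
  | cons v q ih =>
    rw [List.ofFn_succ]
    simp only [Fin.cons_zero, Fin.cons_succ, List.prod_cons]
    rw [casimirOp_ι_mul hL hI hx, ih, wedgeBoundary_cons, map_add,
      casimirWedgeMul_lTensor_mulLeft_ι, add_comm, map_sum]
    congr 1
    refine (hI.sum_mul_apply_prod_ofFn hx (casimirWedge x ∘ₗ LieAlgebra.ad R g v) q).trans ?_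
    simp [casimirWedgeMul_tmul]

theorem casimirOp_eq_casimirWedgeMul_of_mem_exteriorPower (hL : IsAdDerivation L)
    (hI : IsContraction Φ I) (hx : ∀ v, ∑ j, Φ (x j) v • x j = v) {m : ℕ}
    (del : ExteriorAlgebra R g →ₗ[R] g ⊗[R] ExteriorAlgebra R g)
    (hdel : ∀ p : Fin m → g, del (List.ofFn fun t => ι R (p t)).prod = wedgeBoundary R p)
    {y : ExteriorAlgebra R g} (hy : y ∈ ⋀[R]^m g) :
    casimirOp x I L y = casimirWedgeMul x (del y) := by
  suffices ⋀[R]^m g ≤ LinearMap.ker (casimirOp x I L - casimirWedgeMul x ∘ₗ del) by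
    simpa [sub_eq_zero] using this hy
  rw [← ιMulti_span_fixedDegree, Submodule.span_le]
  rintro _ ⟨p, rfl⟩
  simp [ιMulti_apply, hdel, casimirOp_prod_ofFn hL hI hx]

end LieAlgebra

theorem stmt_8_general (g : Type) [LieRing g] [LieAlgebra ℂ g]
    (n : ℕ) (Φ : g →ₗ[ℂ] g →ₗ[ℂ] ℂ)
    (x : Module.Basis (Fin n) ℂ g)
    (hx : ∀ i j, Φ (x i) (x j) = if i = j then 1 else 0)
    -- `I_z`: contraction with `z` via the form
    (Iop : g → (ExteriorAlgebra ℂ g →ₗ[ℂ] ExteriorAlgebra ℂ g))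
    (hIone : ∀ z : g, Iop z 1 = 0)
    (hImul : ∀ (z v : g) (a : ExteriorAlgebra ℂ g),
      Iop z (ExteriorAlgebra.ι ℂ v * a) =
        Φ z v • a - ExteriorAlgebra.ι ℂ v * Iop z a)
    -- `L_z`: the Lie derivative extending `ad z`
    (Lop : g → (ExteriorAlgebra ℂ g →ₗ[ℂ] ExteriorAlgebra ℂ g))
    (hLone : ∀ z : g, Lop z 1 = 0)
    (hLmul : ∀ (z v : g) (a : ExteriorAlgebra ℂ g),
      Lop z (ExteriorAlgebra.ι ℂ v * a) =
        ExteriorAlgebra.ι ℂ ⁅z, v⁆ * a + ExteriorAlgebra.ι ℂ v * Lop z a)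
    (d : ℕ)
    -- `∂`, characterized on decomposables of degree `d + 1`
    (del : ExteriorAlgebra ℂ g →ₗ[ℂ] g ⊗[ℂ] ExteriorAlgebra ℂ g)
    (hdel : ∀ p : Fin (d + 1) → g,
      del (List.ofFn fun r => ExteriorAlgebra.ι ℂ (p r)).prod =
        ∑ r : Fin (d + 1), ∑ s : Fin (d + 1),
          if r < s then
            ((-1 : ℂ) ^ (r.val + s.val)) •
              (⁅p s, p r⁆ ⊗ₜ[ℂ]
                (((List.ofFn fun t => ExteriorAlgebra.ι ℂ (p t)).eraseIdx
                  s.val).eraseIdx r.val).prod)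
          else 0) :
    -- if `y ∈ ⋀^{d+1} g` and `∂ y = 0` then `C_w y = 0`
    ∀ y ∈ (LinearMap.range
        (ExteriorAlgebra.ι ℂ : g →ₗ[ℂ] ExteriorAlgebra ℂ g)) ^ (d + 1),
      del y = 0 →
      (∑ i, ∑ j, ExteriorAlgebra.ι ℂ (x i) *
        Lop ⁅x i, x j⁆ (Iop (x j) y)) = 0 := by
  intro y hy hdely
  have hC := casimirOp_eq_casimirWedgeMul_of_mem_exteriorPower ⟨hLone, hLmul⟩ ⟨hIone, hImul⟩
    (x.sum_smul_eq_self_of_orthonormal hx) del hdel hy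
  rwa [casimirOp_apply, hdely, map_zero] at hC

/-- `C_w` vanishes on the kernel of `∂`: if `y ∈ ⋀^{d+1} g` satisfies `∂ y = 0`
then `C_w y = 0`. -/
theorem stmt_8 (g : Type) [LieRing g] [LieAlgebra ℂ g] [Module.Finite ℂ g]
    [LieAlgebra.IsSimple ℂ g]
    (n : ℕ) (Φ : g →ₗ[ℂ] g →ₗ[ℂ] ℂ)
    (hΦsymm : ∀ u v : g, Φ u v = Φ v u)
    (hΦinv : ∀ z u v : g, Φ ⁅z, u⁆ v + Φ u ⁅z, v⁆ = 0)
    (x : Module.Basis (Fin n) ℂ g)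
    (hx : ∀ i j, Φ (x i) (x j) = if i = j then 1 else 0)
    -- `I_z`: contraction with `z` via the form
    (Iop : g → (ExteriorAlgebra ℂ g →ₗ[ℂ] ExteriorAlgebra ℂ g))
    (hIone : ∀ z : g, Iop z 1 = 0)
    (hImul : ∀ (z v : g) (a : ExteriorAlgebra ℂ g),
      Iop z (ExteriorAlgebra.ι ℂ v * a) =
        Φ z v • a - ExteriorAlgebra.ι ℂ v * Iop z a)
    -- `L_z`: the Lie derivative extending `ad z`
    (Lop : g → (ExteriorAlgebra ℂ g →ₗ[ℂ] ExteriorAlgebra ℂ g))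
    (hLone : ∀ z : g, Lop z 1 = 0)
    (hLmul : ∀ (z v : g) (a : ExteriorAlgebra ℂ g),
      Lop z (ExteriorAlgebra.ι ℂ v * a) =
        ExteriorAlgebra.ι ℂ ⁅z, v⁆ * a + ExteriorAlgebra.ι ℂ v * Lop z a)
    (d : ℕ)
    -- `∂`, characterized on decomposables of degree `d + 1`
    (del : ExteriorAlgebra ℂ g →ₗ[ℂ] g ⊗[ℂ] ExteriorAlgebra ℂ g)
    (hdel : ∀ p : Fin (d + 1) → g,
      del (List.ofFn fun r => ExteriorAlgebra.ι ℂ (p r)).prod =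
        ∑ r : Fin (d + 1), ∑ s : Fin (d + 1),
          if r < s then
            ((-1 : ℂ) ^ (r.val + s.val)) •
              (⁅p s, p r⁆ ⊗ₜ[ℂ]
                (((List.ofFn fun t => ExteriorAlgebra.ι ℂ (p t)).eraseIdx
                  s.val).eraseIdx r.val).prod)
          else 0) :
    -- if `y ∈ ⋀^{d+1} g` and `∂ y = 0` then `C_w y = 0`
    ∀ y ∈ (LinearMap.range
        (ExteriorAlgebra.ι ℂ : g →ₗ[ℂ] ExteriorAlgebra ℂ g)) ^ (d + 1),
      del y = 0 →
      (∑ i, ∑ j, ExteriorAlgebra.ι ℂ (x i) *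
        Lop ⁅x i, x j⁆ (Iop (x j) y)) = 0 :=
  stmt_8_general g n Φ x hx Iop hIone hImul Lop hLone hLmul d del hdel
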